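/- arXiv:2402.10089 — 4 statements merged into one kernel-verified Lean document; each statement's English description precedes it below -/
import Mathlib

section
/- Let x be a real random variable with finite exponential moment E[e^{a|x|}] < ∞ for some a > 0. Then the function φ(z) = E[e^{i z x}] is well-defined (the integrand is integrable) and complex-differentiable (analytic) at every point z ∈ ℂ of the horizontal strip −a < Im(z) < a. -/
open MeasureTheory ProbabilityTheory Complex

/-!
With `ψ(w) = E[exp (w x)]` the complex moment generating function, `φ(z) = ψ(i z)` and
`Re (i z) = -Im z`. The bound `exp (t x) ≤ exp (a |x|)` for `|t| ≤ a` puts `(-a, a)` inside the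
interval where `exp (t x)` is integrable, and `ψ` is holomorphic on the vertical strip over the
interior of that interval.
-/

namespace ProbabilityTheory

variable {Ω : Type*} [MeasurableSpace Ω] {μ : Measure Ω} {X : Ω → ℝ} {a t : ℝ}

lemma mem_integrableExpSet_of_integrable_exp_mul_abs (hX : AEMeasurable X μ)
    (hexp : Integrable (fun ω => Real.exp (a * |X ω|)) μ) (ht : |t| ≤ a) :
    t ∈ integrableExpSet X μ := by
  refine hexp.mono (by fun_prop) (ae_of_all _ fun ω => ?_)
  simp only [Real.norm_eq_abs, Real.abs_exp, Real.exp_le_exp]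
  calc t * X ω ≤ |t * X ω| := le_abs_self _
    _ = |t| * |X ω| := abs_mul _ _
    _ ≤ a * |X ω| := mul_le_mul_of_nonneg_right ht (abs_nonneg _)

lemma Ioo_subset_interior_integrableExpSet (hX : AEMeasurable X μ)
    (hexp : Integrable (fun ω => Real.exp (a * |X ω|)) μ) :
    Set.Ioo (-a) a ⊆ interior (integrableExpSet X μ) :=
  interior_maximal (fun _ ht => mem_integrableExpSet_of_integrable_exp_mul_abs hX hexp
    (abs_lt.2 ht).le) isOpen_Ioo

end ProbabilityTheory

theorem charFun_analytic_on_strip_general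
    {Ω : Type*} [MeasurableSpace Ω] (μ : Measure Ω)
    (x : Ω → ℝ) (hx : Measurable x)
    {a : ℝ}
    (hexp : Integrable (fun ω => Real.exp (a * |x ω|)) μ) :
    ∀ z : ℂ, -a < z.im → z.im < a →
      Integrable (fun ω => Complex.exp (Complex.I * z * (x ω : ℂ))) μ ∧
      DifferentiableAt ℂ
        (fun w : ℂ => ∫ ω, Complex.exp (Complex.I * w * (x ω : ℂ)) ∂μ) z := by
  intro z hz_lower hz_upper
  have hre : (I * z).re ∈ interior (integrableExpSet x μ) :=
    Ioo_subset_interior_integrableExpSet hx.aemeasurable hexp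
      (by rw [Set.mem_Ioo, I_mul_re]; constructor <;> linarith)
  exact ⟨integrable_cexp_mul_of_re_mem_interior_integrableExpSet hre,
    (analyticAt_complexMGF hre).differentiableAt.comp z (differentiableAt_id.const_mul I)⟩

/-- If a real random variable `x` has a finite exponential moment
`E[exp (a |x|)] < ∞` for some `a > 0`, then `φ(z) = E[exp (i z x)]` is well defined
(the integrand is integrable) and complex differentiable at every point `z` of the
horizontal strip `-a < Im z < a`. -/
theorem charFun_analytic_on_strip
    {Ω : Type*} [MeasurableSpace Ω] (μ : Measure Ω) [IsProbabilityMeasure μ]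
    (x : Ω → ℝ) (hx : Measurable x)
    {a : ℝ} (ha : 0 < a)
    (hexp : Integrable (fun ω => Real.exp (a * |x ω|)) μ) :
    ∀ z : ℂ, -a < z.im → z.im < a →
      Integrable (fun ω => Complex.exp (Complex.I * z * (x ω : ℂ))) μ ∧
      DifferentiableAt ℂ
        (fun w : ℂ => ∫ ω, Complex.exp (Complex.I * w * (x ω : ℂ)) ∂μ) z :=
  charFun_analytic_on_strip_general μ x hx hexp
end

section
/- Let x_i and x_j be real random variables on a common probability space with E[|x_i| · |x_j|^ℓ] < ∞ and E[|x_j|^ℓ] < ∞ for all ℓ ≤ r. Suppose x_i is mean independent of x_j, i.e., the conditional expectation of x_i given the σ-algebra generated by x_j equals E[x_i] almost surely. Then for every r ≥ 2, the joint cumulant whose index tuple consists of i once and j repeated r − 1 times vanishes: κ(x)_{i j ⋯ j} = 0. -/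
open MeasureTheory ProbabilityTheory Finset

/-- The set partitions of a finset `s`: finsets `P` of nonempty, pairwise disjoint
blocks whose union is `s`. -/
def setPartitionsOf {ι : Type*} [DecidableEq ι] [Fintype ι] (s : Finset ι) :
    Finset (Finset (Finset ι)) :=
  (Finset.univ : Finset (Finset (Finset ι))).filter
    (fun P => (∀ B ∈ P, B.Nonempty) ∧
      (∀ B ∈ P, ∀ C ∈ P, B ≠ C → Disjoint B C) ∧ P.sup id = s)

/-- The joint cumulant of the subfamily `(x_k)_{k ∈ s}` of a family of real random
variables, defined by the combinatorial moment–cumulant formula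
`κ = Σ_{π} (-1)^{|π|-1} (|π|-1)! Π_{B ∈ π} E[Π_{k ∈ B} x_k]`,
the sum running over all set partitions `π` of `s`. -/
noncomputable def jointCumulant {Ω : Type*} [MeasurableSpace Ω] (μ : Measure Ω)
    {ι : Type*} [DecidableEq ι] [Fintype ι] (x : ι → Ω → ℝ) (s : Finset ι) : ℝ :=
  ∑ P ∈ setPartitionsOf s,
    (-1 : ℝ) ^ (P.card - 1) * (Nat.factorial (P.card - 1)) *
      ∏ B ∈ P, ∫ ω, (∏ k ∈ B, x k ω) ∂μ

/-! Every partition of `insert i t` arises exactly once from a partition `σ` of `t`, either by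
adding the new block `{i}` or by inserting `i` into one of the `#σ` blocks of `σ`. When the
moments factor as `m (insert i B) = m {i} * m B`, each of these contributes `m {i} * ∏ B ∈ σ, m B`,
with weight `w (#σ + 1)` resp. `w #σ`, and the cumulant weights `w n = (-1)^(n-1) (n-1)!` satisfy
`w (n + 1) + n * w n = 0`. Mean independence gives exactly this factorisation of the moments of
`(X, Y, …, Y)`: `E[X Y^l] = E[E[X | Y] Y^l] = E[X] E[Y^l]`. -/

section SetPartitions

variable {ι : Type*} [DecidableEq ι] [Fintype ι] {s t : Finset ι} {P σ : Finset (Finset ι)}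
  {B C : Finset ι} {i : ι}

theorem mem_setPartitionsOf : P ∈ setPartitionsOf s ↔ (∀ B ∈ P, B.Nonempty) ∧
    (∀ B ∈ P, ∀ C ∈ P, B ≠ C → Disjoint B C) ∧ P.sup id = s := by
  simp [setPartitionsOf]

theorem empty_notMem_of_mem_setPartitionsOf (hP : P ∈ setPartitionsOf s) : ∅ ∉ P :=
  fun h => (mem_setPartitionsOf.1 hP).1 ∅ h |>.ne_empty rfl

theorem subset_of_mem_setPartitionsOf (hP : P ∈ setPartitionsOf s) (hB : B ∈ P) : B ⊆ s :=
  (mem_setPartitionsOf.1 hP).2.2 ▸ le_sup (f := id) hB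

theorem exists_mem_of_mem_setPartitionsOf (hP : P ∈ setPartitionsOf s) (hi : i ∈ s) :
    ∃ B ∈ P, i ∈ B := by
  rw [← (mem_setPartitionsOf.1 hP).2.2] at hi
  simpa using mem_sup.1 hi

theorem insert_insert_erase_mem_setPartitionsOf (hσ : σ ∈ setPartitionsOf t) (hi : i ∉ t)
    (hB : B ∈ insert ∅ σ) : insert (insert i B) (σ.erase B) ∈ setPartitionsOf (insert i t) := by
  obtain ⟨hne, hdisj, hsup⟩ := mem_setPartitionsOf.1 hσ
  have hjoin : ∀ C ∈ σ.erase B, Disjoint (insert i B) C := by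
    intro C hC
    have hCσ := mem_of_mem_erase hC
    refine disjoint_insert_left.2 ⟨fun hiC => hi (subset_of_mem_setPartitionsOf hσ hCσ hiC), ?_⟩
    rcases mem_insert.1 hB with rfl | hBσ
    · exact disjoint_empty_left C
    · exact hdisj B hBσ C hCσ (ne_of_mem_erase hC).symm
  have hunion : B ∪ (σ.erase B).sup id = t := by
    rcases mem_insert.1 hB with rfl | hBσ
    · simp [erase_eq_of_notMem (empty_notMem_of_mem_setPartitionsOf hσ), hsup]
    · simpa [← hsup] using congrArg (·.sup id) (insert_erase hBσ)
  refine mem_setPartitionsOf.2 ⟨?_, ?_, ?_⟩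
  · intro C hC
    rcases mem_insert.1 hC with rfl | hC
    · exact insert_nonempty i B
    · exact hne C (mem_of_mem_erase hC)
  · intro C hC D hD hCD
    rcases mem_insert.1 hC with rfl | hC <;> rcases mem_insert.1 hD with rfl | hD
    · exact absurd rfl hCD
    · exact hjoin D hD
    · exact (hjoin C hC).symm
    · exact hdisj C (mem_of_mem_erase hC) D (mem_of_mem_erase hD) hCD
  · rw [sup_insert, id, sup_eq_union, insert_union, hunion]

theorem eq_of_insert_insert_erase_eq {σ' : Finset (Finset ι)} {B' : Finset ι}
    (hσ : σ ∈ setPartitionsOf t) (hσ' : σ' ∈ setPartitionsOf t) (hi : i ∉ t)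
    (hB : B ∈ insert ∅ σ) (hB' : B' ∈ insert ∅ σ')
    (h : insert (insert i B) (σ.erase B) = insert (insert i B') (σ'.erase B')) :
    σ = σ' ∧ B = B' := by
  have hiC : ∀ {τ C}, τ ∈ setPartitionsOf t → C ∈ insert ∅ τ → i ∉ C := by
    intro τ C hτ hC hiC
    rcases mem_insert.1 hC with rfl | hC
    · exact notMem_empty i hiC
    · exact hi (subset_of_mem_setPartitionsOf hτ hC hiC)
  have hfresh : ∀ {τ C}, τ ∈ setPartitionsOf t → insert i C ∉ τ.erase C :=
    fun hτ hC => hiC hτ (mem_insert_of_mem (mem_of_mem_erase hC)) (mem_insert_self _ _)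
  obtain rfl : B = B' := by
    have hmem : insert i B ∈ insert (insert i B') (σ'.erase B') := h ▸ mem_insert_self _ _
    rcases mem_insert.1 hmem with heq | hmem
    · simpa [erase_insert (hiC hσ hB), erase_insert (hiC hσ' hB')] using congrArg (·.erase i) heq
    · exact (hiC hσ' (mem_insert_of_mem (mem_of_mem_erase hmem)) (mem_insert_self i B)).elim
  have herase : σ.erase B = σ'.erase B := by
    simpa [erase_insert (hfresh hσ), erase_insert (hfresh hσ')] using
      congrArg (·.erase (insert i B)) h
  refine ⟨ext fun C => ?_, rfl⟩
  by_cases hCB : C = B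
  · subst hCB
    have := empty_notMem_of_mem_setPartitionsOf hσ
    have := empty_notMem_of_mem_setPartitionsOf hσ'
    grind
  · simpa [hCB] using congrArg (C ∈ ·) herase

theorem erase_mem_setPartitionsOf {B₀ : Finset ι} (hP : P ∈ setPartitionsOf s) (hB₀ : B₀ ∈ P)
    (hiB₀ : i ∈ B₀) : (insert (B₀.erase i) (P.erase B₀)).erase ∅ ∈ setPartitionsOf (s.erase i) := by
  obtain ⟨-, hdisj, hsup⟩ := mem_setPartitionsOf.1 hP
  set ρ := P.erase B₀
  have hρ : ∀ C ∈ ρ, Disjoint B₀ C :=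
    fun C hC => hdisj B₀ hB₀ C (mem_of_mem_erase hC) (ne_of_mem_erase hC).symm
  have hdisjρ : ∀ C ∈ insert (B₀.erase i) ρ, ∀ D ∈ ρ, C ≠ D → Disjoint C D := by
    intro C hC D hD hCD
    rcases mem_insert.1 hC with rfl | hC
    · exact disjoint_of_subset_left (erase_subset i B₀) (hρ D hD)
    · exact hdisj C (mem_of_mem_erase hC) D (mem_of_mem_erase hD) hCD
  have hiρ : i ∉ ρ.sup id := by
    simp only [mem_sup, id, not_exists, not_and]
    exact fun C hC => disjoint_left.1 (hρ C hC) hiB₀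
  have hsplit : B₀ ∪ ρ.sup id = s := by
    simpa [hsup] using congrArg (·.sup id) (insert_erase hB₀)
  refine mem_setPartitionsOf.2 ⟨fun C hC => nonempty_iff_ne_empty.2 (ne_of_mem_erase hC), ?_, ?_⟩
  · intro C hC D hD hCD
    rcases mem_insert.1 (mem_of_mem_erase hD) with rfl | hD
    · have hCρ : C ∈ ρ := (mem_insert.1 (mem_of_mem_erase hC)).resolve_left hCD
      exact (hdisjρ _ (mem_insert_self _ _) C hCρ hCD.symm).symm
    · exact hdisjρ C (mem_of_mem_erase hC) D hD hCD
  · rw [← bot_eq_empty, sup_erase_bot, sup_insert, id, sup_eq_union, ← hsplit,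
      erase_union_distrib, erase_eq_of_notMem hiρ]

theorem exists_insert_insert_erase_eq (hP : P ∈ setPartitionsOf (insert i t)) (hi : i ∉ t) :
    ∃ σ ∈ setPartitionsOf t, ∃ B ∈ insert ∅ σ, insert (insert i B) (σ.erase B) = P := by
  obtain ⟨B₀, hB₀, hiB₀⟩ := exists_mem_of_mem_setPartitionsOf hP (mem_insert_self i t)
  have hempty : ∅ ∉ P.erase B₀ :=
    fun h => empty_notMem_of_mem_setPartitionsOf hP (mem_of_mem_erase h)
  have hBρ : B₀.erase i ∉ P.erase B₀ := by
    intro h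
    obtain ⟨-, hdisj, -⟩ := mem_setPartitionsOf.1 hP
    have hself : Disjoint (B₀.erase i) (B₀.erase i) := disjoint_of_subset_left (erase_subset i B₀)
      (hdisj B₀ hB₀ _ (mem_of_mem_erase h) (ne_of_mem_erase h).symm)
    exact hempty (bot_eq_empty ▸ disjoint_self.1 hself ▸ h)
  refine ⟨_, erase_insert hi ▸ erase_mem_setPartitionsOf hP hB₀ hiB₀, B₀.erase i, ?_, ?_⟩
  · by_cases hB : B₀.erase i = ∅
    · exact hB ▸ mem_insert_self _ _
    · exact mem_insert_of_mem (mem_erase.2 ⟨hB, mem_insert_self _ _⟩)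
  · have hρ : ((insert (B₀.erase i) (P.erase B₀)).erase ∅).erase (B₀.erase i) = P.erase B₀ := by
      ext C; by_cases hC : C = B₀.erase i <;> by_cases hC' : C = ∅ <;> simp_all
    rw [hρ, insert_erase hiB₀, insert_erase hB₀]

/-- `i` joins the block `B` of `σ`; the choice `B = ∅` makes `{i}` a new block. -/
theorem sum_setPartitionsOf_insert {M : Type*} [AddCommMonoid M] (f : Finset (Finset ι) → M)
    (hi : i ∉ t) :
    ∑ P ∈ setPartitionsOf (insert i t), f P =
      ∑ σ ∈ setPartitionsOf t, ∑ B ∈ insert ∅ σ, f (insert (insert i B) (σ.erase B)) := by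
  rw [sum_sigma']
  refine (sum_nbij (fun x : (_ : Finset (Finset ι)) × Finset ι =>
    insert (insert i x.2) (x.1.erase x.2)) ?_ ?_ ?_ fun _ _ => rfl).symm
  · rintro ⟨σ, B⟩ hx
    rw [mem_sigma] at hx
    exact insert_insert_erase_mem_setPartitionsOf hx.1 hi hx.2
  · rintro ⟨σ, B⟩ hx ⟨σ', B'⟩ hx' h
    rw [mem_coe, mem_sigma] at hx hx'
    obtain ⟨rfl, rfl⟩ := eq_of_insert_insert_erase_eq hx.1 hx'.1 hi hx.2 hx'.2 h
    rfl
  · intro P hP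
    obtain ⟨σ, hσ, B, hB, rfl⟩ := exists_insert_insert_erase_eq (mem_coe.1 hP) hi
    exact ⟨⟨σ, B⟩, mem_sigma.2 ⟨hσ, hB⟩, rfl⟩

-- The coefficient of a partition with `n` blocks in `jointCumulant`.
def cumulantCoeff (n : ℕ) : ℝ := (-1) ^ (n - 1) * (n - 1).factorial

theorem cumulantCoeff_succ {n : ℕ} (hn : n ≠ 0) :
    cumulantCoeff (n + 1) = -n * cumulantCoeff n := by
  obtain ⟨k, rfl⟩ := Nat.exists_eq_succ_of_ne_zero hn
  simp [cumulantCoeff, Nat.factorial_succ, pow_succ]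
  ring

theorem sum_cumulantCoeff_mul_prod_eq_zero (m : Finset ι → ℝ) (hi : i ∉ t) (ht : t.Nonempty)
    (hm : ∀ B ⊆ t, B.Nonempty → m (insert i B) = m {i} * m B) :
    ∑ P ∈ setPartitionsOf (insert i t), cumulantCoeff #P * ∏ B ∈ P, m B = 0 := by
  rw [sum_setPartitionsOf_insert _ hi]
  refine sum_eq_zero fun σ hσ => ?_
  have hempty := empty_notMem_of_mem_setPartitionsOf hσ
  have hfresh : ∀ B, insert i B ∉ σ :=
    fun B h => hi (subset_of_mem_setPartitionsOf hσ h (mem_insert_self i B))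
  have hcard : #σ ≠ 0 := by
    have hsup := (mem_setPartitionsOf.1 hσ).2.2
    rintro hσ0
    rw [card_eq_zero.1 hσ0, sup_empty] at hsup
    exact ht.ne_empty hsup.symm
  have hjoin : ∀ B ∈ σ, cumulantCoeff #(insert (insert i B) (σ.erase B)) *
      ∏ C ∈ insert (insert i B) (σ.erase B), m C = cumulantCoeff #σ * (m {i} * ∏ C ∈ σ, m C) := by
    intro B hB
    rw [card_insert_of_notMem (fun h => hfresh B (mem_of_mem_erase h)), card_erase_add_one hB,
      prod_insert (fun h => hfresh B (mem_of_mem_erase h)),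
      hm B (subset_of_mem_setPartitionsOf hσ hB)
        (nonempty_of_ne_empty (ne_of_mem_of_not_mem hB hempty)),
      mul_assoc, mul_prod_erase σ m hB]
  have hsingle : {i} ∉ σ := by simpa using hfresh ∅
  rw [sum_insert hempty, sum_congr rfl hjoin, sum_const, insert_empty, erase_eq_of_notMem hempty,
    card_insert_of_notMem hsingle, prod_insert hsingle, cumulantCoeff_succ hcard, nsmul_eq_mul]
  ring

end SetPartitions

theorem jointCumulant_insert_eq_zero {Ω : Type*} [MeasurableSpace Ω] (μ : Measure Ω)
    {ι : Type*} [DecidableEq ι] [Fintype ι] (x : ι → Ω → ℝ) {t : Finset ι} {i : ι}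
    (hi : i ∉ t) (ht : t.Nonempty)
    (hx : ∀ B ⊆ t, B.Nonempty →
      ∫ ω, x i ω * ∏ k ∈ B, x k ω ∂μ = (∫ ω, x i ω ∂μ) * ∫ ω, ∏ k ∈ B, x k ω ∂μ) :
    jointCumulant μ x (insert i t) = 0 :=
  sum_cumulantCoeff_mul_prod_eq_zero (fun B => ∫ ω, ∏ k ∈ B, x k ω ∂μ) hi ht fun B hB hBne => by
    simpa [prod_insert fun hiB => hi (hB hiB)] using hx B hB hBne

theorem integral_mul_eq_of_condExp_ae_eq_const {Ω : Type*} {m m₀ : MeasurableSpace Ω}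
    {μ : Measure Ω} [IsFiniteMeasure μ] (hm : m ≤ m₀) {X f : Ω → ℝ} {c : ℝ}
    (hf : StronglyMeasurable[m] f) (hX : Integrable X μ) (hXf : Integrable (X * f) μ)
    (hmean : μ[X | m] =ᵐ[μ] fun _ => c) :
    ∫ ω, X ω * f ω ∂μ = c * ∫ ω, f ω ∂μ := by
  calc ∫ ω, X ω * f ω ∂μ = ∫ ω, (μ[X * f | m]) ω ∂μ := (integral_condExp hm).symm
    _ = ∫ ω, c * f ω ∂μ := by
      refine integral_congr_ae ?_
      filter_upwards [condExp_mul_of_stronglyMeasurable_right hf hXf hX, hmean] with ω h h'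
      rw [h, Pi.mul_apply, h']
    _ = c * ∫ ω, f ω ∂μ := integral_const_mul c _

theorem cumulant_eq_zero_of_meanIndep_general
    {Ω : Type*} [MeasurableSpace Ω] (μ : Measure Ω) [IsProbabilityMeasure μ]
    (X Y : Ω → ℝ) (hX : Measurable X) (hY : Measurable Y)
    {r : ℕ} (hr : 2 ≤ r)
    (hintXY : ∀ l : ℕ, l ≤ r → Integrable (fun ω => |X ω| * |Y ω| ^ l) μ)
    (hmean : μ[X | MeasurableSpace.comap Y inferInstance]
      =ᵐ[μ] fun _ => ∫ ω, X ω ∂μ) :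
    jointCumulant μ (fun k : Fin r => if (k : ℕ) = 0 then X else Y)
      Finset.univ = 0 := by
  obtain ⟨n, rfl⟩ := Nat.exists_eq_add_of_le' hr
  have hXY : ∀ l ≤ n + 2, Integrable (fun ω => X ω * Y ω ^ l) μ := fun l hl =>
    (hintXY l hl).mono' (hX.mul (hY.pow_const l)).aestronglyMeasurable
      (ae_of_all _ fun ω => by simp)
  rw [← insert_erase (mem_univ 0)]
  refine jointCumulant_insert_eq_zero μ _ (notMem_erase 0 univ) ⟨1, by simp⟩ fun B hB _ => ?_
  have hBY : ∀ ω, ∏ k ∈ B, (if (k : ℕ) = 0 then X else Y) ω = Y ω ^ #B := fun ω =>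
    prod_eq_pow_card fun k hk => by simp [Fin.val_ne_zero_iff.2 (ne_of_mem_erase (hB hk))]
  simp only [hBY, Fin.val_zero]
  exact integral_mul_eq_of_condExp_ae_eq_const hY.comap_le
    ((comap_measurable Y).pow_const #B).stronglyMeasurable (by simpa using hXY 0 (by omega))
    (hXY #B ((card_le_univ B).trans (by simp))) hmean

/-- If `X` is mean independent of `Y` (the conditional expectation of
`X` given the σ-algebra generated by `Y` is a.s. equal to `E[X]`), with the stated
moment conditions, then for every `r ≥ 2` the joint cumulant whose index tuple
consists of `X` once and `Y` repeated `r - 1` times vanishes. -/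
theorem cumulant_eq_zero_of_meanIndep
    {Ω : Type*} [MeasurableSpace Ω] (μ : Measure Ω) [IsProbabilityMeasure μ]
    (X Y : Ω → ℝ) (hX : Measurable X) (hY : Measurable Y)
    {r : ℕ} (hr : 2 ≤ r)
    (hintXY : ∀ l : ℕ, l ≤ r → Integrable (fun ω => |X ω| * |Y ω| ^ l) μ)
    (hintY : ∀ l : ℕ, l ≤ r → Integrable (fun ω => |Y ω| ^ l) μ)
    (hmean : μ[X | MeasurableSpace.comap Y inferInstance]
      =ᵐ[μ] fun _ => ∫ ω, X ω ∂μ) :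
    jointCumulant μ (fun k : Fin r => if (k : ℕ) = 0 then X else Y)
      Finset.univ = 0 :=
  cumulant_eq_zero_of_meanIndep_general μ X Y hX hY hr hintXY hmean
end

section
/- Let I_1 ⊔ ⋯ ⊔ I_m be a partition of {1, …, d} and let T be a symmetric tensor of order r on ℝ^d belonging to V_I, i.e., T_{i_1…i_r} = 0 whenever two of the indices i_1, …, i_r lie in different blocks of the partition. Let Q be a d×d orthogonal matrix such that, in the block decomposition of Q induced by the partition, each block row and each block column contains exactly one nonzero submatrix Q[I_a, I_b]. Then the tensor Q ∙ T, defined by (Q ∙ T)_{i_1…i_r} = Σ_{j_1,…,j_r=1}^d Q_{i_1 j_1} ⋯ Q_{i_r j_r} T_{j_1…j_r}, also belongs to V_I. -/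
/-!
A term `(∏ k, Q (i k) (j k)) * T j` of `Q ∙ T` can only be nonzero if `T j ≠ 0`, so that all
`j k` lie in one block `c`, and if every `Q (i k) (j k) ≠ 0`. Since block column `c` of `Q` has a
single nonzero block, all `i k` then lie in the same block row, so every term vanishes at an
index tuple `i` that meets two blocks.
-/

open Finset Matrix

section BlockSparsity

variable {ρ ι κ R : Type*} (b : ι → κ)

theorem block_eq_of_ne_zero_of_existsUnique_block [Zero R] {Q : Matrix ι ι R}
    (hcol : ∀ c : κ, ∃! a : κ, ∃ u v, b u = a ∧ b v = c ∧ Q u v ≠ 0)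
    {u u' v v' : ι} (hv : b v = b v') (h : Q u v ≠ 0) (h' : Q u' v' ≠ 0) :
    b u = b u' :=
  (hcol (b v)).unique ⟨u, v, rfl, rfl, h⟩ ⟨u', v', rfl, hv.symm, h'⟩

theorem prod_mul_eq_zero_of_block_sparse [Fintype ρ] [CommMonoidWithZero R]
    {Q : Matrix ι ι R} {T : (ρ → ι) → R}
    (hT : ∀ j : ρ → ι, (∃ k l, b (j k) ≠ b (j l)) → T j = 0)
    (hcol : ∀ c : κ, ∃! a : κ, ∃ u v, b u = a ∧ b v = c ∧ Q u v ≠ 0)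
    {i : ρ → ι} (hi : ∃ k l, b (i k) ≠ b (i l)) (j : ρ → ι) :
    (∏ k, Q (i k) (j k)) * T j = 0 := by
  obtain ⟨k, l, hkl⟩ := hi
  by_cases hj : b (j k) = b (j l)
  · suffices ∃ k', Q (i k') (j k') = 0 by
      obtain ⟨k', hk'⟩ := this
      rw [prod_eq_zero (mem_univ k') hk', zero_mul]
    by_contra! hQ
    exact hkl (block_eq_of_ne_zero_of_existsUnique_block b hcol hj (hQ k) (hQ l))
  · rw [hT j ⟨k, l, hj⟩, mul_zero]

theorem sum_prod_mul_eq_zero_of_block_sparse [Fintype ρ] [DecidableEq ρ] [Fintype ι]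
    [CommSemiring R] {Q : Matrix ι ι R} {T : (ρ → ι) → R}
    (hT : ∀ j : ρ → ι, (∃ k l, b (j k) ≠ b (j l)) → T j = 0)
    (hcol : ∀ c : κ, ∃! a : κ, ∃ u v, b u = a ∧ b v = c ∧ Q u v ≠ 0)
    {i : ρ → ι} (hi : ∃ k l, b (i k) ≠ b (i l)) :
    ∑ j : ρ → ι, (∏ k, Q (i k) (j k)) * T j = 0 :=
  sum_eq_zero fun j _ => prod_mul_eq_zero_of_block_sparse b hT hcol hi j

end BlockSparsity

theorem blockOrthogonal_preserves_partition_sparsity_general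
    {d m r : ℕ} (b : Fin d → Fin m)
    (T : (Fin r → Fin d) → ℝ)
    (hT : ∀ i : Fin r → Fin d, (∃ k l, b (i k) ≠ b (i l)) → T i = 0)
    (Q : Matrix (Fin d) (Fin d) ℝ)
    (hcol : ∀ c : Fin m, ∃! a : Fin m, ∃ u v, b u = a ∧ b v = c ∧ Q u v ≠ 0) :
    ∀ i : Fin r → Fin d, (∃ k l, b (i k) ≠ b (i l)) →
      (∑ j : Fin r → Fin d, (∏ k, Q (i k) (j k)) * T j) = 0 :=
  fun _ hi => sum_prod_mul_eq_zero_of_block_sparse b hT hcol hi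

/-- Let the partition `I_1 ⊔ ⋯ ⊔ I_m` of `{1, …, d}` be recorded by the
(surjective) block-assignment map `b : Fin d → Fin m`, and let `T` be a symmetric
order-`r` tensor on `ℝ^d` lying in `V_I` (its entries vanish whenever two indices lie
in different blocks). If `Q` is orthogonal and, in the induced block decomposition,
every block row and every block column of `Q` contains exactly one nonzero submatrix,
then `Q ∙ T` also lies in `V_I`. -/
theorem blockOrthogonal_preserves_partition_sparsity
    {d m r : ℕ} (b : Fin d → Fin m) (hb : Function.Surjective b)
    (T : (Fin r → Fin d) → ℝ)
    (hsym : ∀ (σ : Equiv.Perm (Fin r)) (i : Fin r → Fin d), T (i ∘ σ) = T i)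
    (hT : ∀ i : Fin r → Fin d, (∃ k l, b (i k) ≠ b (i l)) → T i = 0)
    (Q : Matrix (Fin d) (Fin d) ℝ) (hQ : Qᵀ * Q = 1)
    (hrow : ∀ a : Fin m, ∃! c : Fin m, ∃ u v, b u = a ∧ b v = c ∧ Q u v ≠ 0)
    (hcol : ∀ c : Fin m, ∃! a : Fin m, ∃ u v, b u = a ∧ b v = c ∧ Q u v ≠ 0) :
    ∀ i : Fin r → Fin d, (∃ k l, b (i k) ≠ b (i l)) →
      (∑ j : Fin r → Fin d, (∏ k, Q (i k) (j k)) * T j) = 0 :=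
  blockOrthogonal_preserves_partition_sparsity_general b T hT Q hcol
end

section
/- Let f_1, …, f_m, g, h : ℝ^n → ℝ be continuous functions satisfying Σ_{i=1}^m f_i(t_1 + C_i t_2) = g(t_1) + h(t_2) for all t_1, t_2 ∈ ℝ^n, where C_1, …, C_m are invertible n×n real matrices such that C_i − C_j is invertible for all i ≠ j. Then f_1, …, f_m, g and h are all polynomial functions of degree at most m. -/
/-!
Regard `-g` as an extra summand with matrix `0`, so that the hypothesis reads
`∑ F_i (x + L_i y) = h y` with `L_i - L_j` invertible for all `i ≠ j`. Replacing `(x, y)` by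
`(x + L_j v, y - v)` and subtracting kills the `j`-th summand and turns every other `F_i` into its
difference `Δ_{(L_j - L_i) v} F_i`, where `(L_j - L_i) v` is arbitrary. By induction on the number
of summands, all `(m + 1)`-fold differences of every `F_i` vanish, hence also those of `h`.

A continuous function `ℝ → ℝ` whose differences are all polynomials is a polynomial: subtracting a
discrete antiderivative of `Δ_1 φ` leaves a `1`-periodic function with constant differences, which
is constant by Cauchy's functional equation. So a continuous function on `ℝⁿ` with vanishing
`(m + 1)`-fold differences is a polynomial of degree `≤ m` on every line; being polynomial in each
coordinate it is a polynomial (Lagrange interpolation), and its degree along lines through the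
origin bounds its total degree.
-/

open fwdDiff
open scoped Polynomial

section

variable {M N G : Type*} [AddCommMonoid M] [AddCommMonoid N] [AddCommGroup G]

def FwdDiffVanishes : ℕ → (M → G) → Prop
  | 0, f => f = 0
  | k + 1, f => ∀ h, FwdDiffVanishes k (Δ_[h] f)

namespace FwdDiffVanishes

theorem zero (k : ℕ) : FwdDiffVanishes k (0 : M → G) := by
  induction k with
  | zero => rfl
  | succ k ih =>
    intro h
    rwa [show Δ_[h] (0 : M → G) = 0 from funext fun _ => sub_self 0]

theorem add {k : ℕ} {f g : M → G} (hf : FwdDiffVanishes k f) (hg : FwdDiffVanishes k g) :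
    FwdDiffVanishes k (f + g) := by
  induction k generalizing f g with
  | zero => exact (congrArg₂ (· + ·) hf hg).trans (add_zero 0)
  | succ k ih => intro h; rw [fwdDiff_add]; exact ih (hf h) (hg h)

theorem neg {k : ℕ} {f : M → G} (hf : FwdDiffVanishes k f) : FwdDiffVanishes k (-f) := by
  induction k generalizing f with
  | zero => exact (congrArg Neg.neg hf).trans neg_zero
  | succ k ih =>
    intro h
    rw [show Δ_[h] (-f) = -Δ_[h] f from funext fun _ => (neg_sub_neg _ _).trans (neg_sub _ _).symm]
    exact ih (hf h)

theorem sum {ι : Type*} {k : ℕ} {s : Finset ι} {f : ι → M → G}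
    (hf : ∀ i ∈ s, FwdDiffVanishes k (f i)) : FwdDiffVanishes k (∑ i ∈ s, f i) :=
  Finset.sum_induction f _ (fun _ _ => add) (zero k) hf

theorem comp_addMonoidHom {k : ℕ} {f : M → G} (hf : FwdDiffVanishes k f) (L : N →+ M) :
    FwdDiffVanishes k (f ∘ L) := by
  induction k generalizing f with
  | zero => rw [show f = 0 from hf]; rfl
  | succ k ih =>
    intro h
    rw [show Δ_[h] (f ∘ L) = Δ_[L h] f ∘ L from funext fun y => by simp [fwdDiff]]
    exact ih (hf (L h))

theorem comp_add_left {k : ℕ} {f : M → G} (hf : FwdDiffVanishes k f) (x : M) :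
    FwdDiffVanishes k (fun y => f (x + y)) := by
  induction k generalizing f with
  | zero => rw [show f = 0 from hf]; rfl
  | succ k ih =>
    intro h
    rw [show Δ_[h] (fun y => f (x + y)) = fun y => Δ_[h] f (x + y) from
      funext fun y => by simp [fwdDiff, add_assoc]]
    exact ih (hf h)

theorem iterate_eq_zero {k : ℕ} {f : M → G} (hf : FwdDiffVanishes k f) (h : M) :
    (fwdDiff h)^[k] f = 0 := by
  induction k generalizing f with
  | zero => exact hf
  | succ k ih => exact ih (hf h)

end FwdDiffVanishes

theorem fwdDiffVanishes_of_sum_comp_add_eq {ι V : Type*} [DecidableEq ι] [AddCommGroup V]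
    {L : ι → V →+ V} {s : Finset ι}
    (hL : ∀ i ∈ s, ∀ j ∈ s, i ≠ j → Function.Surjective ⇑(L i - L j))
    {f : ι → V → G} {H : V → G} (hfH : ∀ x y, ∑ i ∈ s, f i (x + L i y) = H y) :
    ∀ i ∈ s, FwdDiffVanishes s.card (f i) := by
  induction s using Finset.strongInduction generalizing f H with
  | H s ih =>
  intro i hi
  by_cases hs : ∃ j ∈ s, j ≠ i
  · obtain ⟨j, hj, hji⟩ := hs
    rw [← Finset.card_erase_add_one hj]
    intro w
    obtain ⟨v, hv⟩ := hL j hj i hi hji w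
    have hshift : ∀ x y,
        ∑ k ∈ s.erase j, Δ_[(L j - L k) v] (f k) (x + L k y) = H (y - v) - H y := by
      intro x y
      rw [← hfH (x + L j v) (y - v), ← hfH x y, ← Finset.sum_sub_distrib,
        ← Finset.sum_erase_add _ _ hj, map_sub, add_add_sub_cancel, sub_self, add_zero]
      refine Finset.sum_congr rfl fun k _ => ?_
      simp only [fwdDiff, AddMonoidHom.sub_apply, map_sub]
      congr 2
      abel
    have := ih (s.erase j) (Finset.erase_ssubset hj)
      (fun k hk l hl => hL k (Finset.mem_of_mem_erase hk) l (Finset.mem_of_mem_erase hl))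
      hshift i (Finset.mem_erase.mpr ⟨hji.symm, hi⟩)
    rwa [hv] at this
  · push Not at hs
    obtain rfl : s = {i} := Finset.eq_singleton_iff_unique_mem.mpr ⟨hi, hs⟩
    have hconst : ∀ x, f i x = H 0 := fun x => by simpa using hfH x 0
    intro w
    funext x
    simp [fwdDiff, hconst]

end

namespace Polynomial

theorem exists_eval_add_one_sub_eval_eq {K : Type*} [Field K] [CharZero K] (p : K[X]) :
    ∃ Q : K[X], ∀ x, Q.eval (x + 1) - Q.eval x = p.eval x := by
  let B : ℕ → K[X] := fun d => (bernoulli (d + 1)).map (algebraMap ℚ K)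
  have hB : ∀ d x, (B d).eval (x + 1) = (B d).eval x + (d + 1) * x ^ d := fun d x => by
    simpa [B, Polynomial.map_comp, eval_comp, eval_map_algebraMap, add_comm] using
      congrArg (fun P => (P.map (algebraMap ℚ K)).eval x) (bernoulli_comp_one_add_X (d + 1))
  refine ⟨∑ d ∈ p.support, C (p.coeff d / (d + 1)) * B d, fun x => ?_⟩
  simp only [eval_finsetSum, eval_mul, eval_C, ← Finset.sum_sub_distrib, ← mul_sub, hB,
    add_sub_cancel_left]
  rw [eval_eq_sum, Polynomial.sum_def]
  refine Finset.sum_congr rfl fun d _ => ?_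
  field_simp

variable {R : Type*} [CommRing R] [IsDomain R] [CharZero R]

theorem eq_C_of_periodic (p : R[X]) (hp : Function.Periodic p.eval 1) : p = C (p.eval 0) := by
  refine eq_of_infinite_eval_eq _ _ ((Set.infinite_range_of_injective Nat.cast_injective).mono ?_)
  rintro _ ⟨k, rfl⟩
  simpa using hp.nat_mul_eq k

theorem natDegree_le_of_fwdDiff_iterate_eq_zero {p : R[X]} {k : ℕ}
    (hp : (fwdDiff 1)^[k + 1] p.eval = 0) : p.natDegree ≤ k := by
  by_contra! hk
  have h0 : (fwdDiff 1)^[p.natDegree] p.eval = 0 := by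
    rw [← Nat.sub_add_cancel hk, Function.iterate_add_apply, hp]
    exact Function.iterate_fixed (fwdDiff_const (1 : R) (0 : R)) _
  have hp0 : p = 0 := by
    simpa [Nat.factorial_ne_zero] using
      congrFun (p.fwdDiff_iter_degree_eq_factorial.symm.trans h0) 0
  simp [hp0] at hk

end Polynomial

theorem eq_of_forall_fwdDiff_const {ψ : ℝ → ℝ} (hψ : Continuous ψ)
    (hconst : ∀ σ x, ψ (x + σ) - ψ x = ψ σ - ψ 0) (h1 : ψ 1 = ψ 0) (x : ℝ) : ψ x = ψ 0 := by
  let c : ℝ →+ ℝ := AddMonoidHom.mk' (fun σ => ψ σ - ψ 0) fun σ τ => by linarith [hconst τ σ]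
  have hcx : c x = 0 := by simpa [c, h1] using map_real_smul c (hψ.sub continuous_const) x 1
  simpa [c, sub_eq_zero] using hcx

theorem exists_polynomial_of_forall_fwdDiff {φ : ℝ → ℝ} (hφ : Continuous φ)
    (hΔ : ∀ σ, ∃ p : ℝ[X], Δ_[σ] φ = p.eval) : ∃ P : ℝ[X], φ = P.eval := by
  obtain ⟨p₁, hp₁⟩ := hΔ 1
  obtain ⟨Q, hQ⟩ := p₁.exists_eval_add_one_sub_eval_eq
  set ψ : ℝ → ℝ := fun x => φ x - Q.eval x with hψ
  have hper : Function.Periodic ψ 1 := fun x => by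
    have hp₁x : φ (x + 1) - φ x = p₁.eval x := congrFun hp₁ x
    linarith [hQ x]
  have hconst : ∀ σ x, ψ (x + σ) - ψ x = ψ σ - ψ 0 := by
    intro σ
    obtain ⟨p, hp⟩ := hΔ σ
    set r := p - (Q.comp (Polynomial.X + Polynomial.C σ) - Q)
    have hr : Δ_[σ] ψ = r.eval := funext fun x => by
      have hpx : φ (x + σ) - φ x = p.eval x := congrFun hp x
      simp only [fwdDiff, hψ, r, Polynomial.eval_sub, Polynomial.eval_comp, Polynomial.eval_add,
        Polynomial.eval_X, Polynomial.eval_C]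
      linarith
    have hr_per : Function.Periodic r.eval 1 := hr ▸ (hper.add_const σ).sub hper
    have hr_const : ∀ x, Δ_[σ] ψ x = Δ_[σ] ψ 0 := by
      rw [hr, r.eq_C_of_periodic hr_per]
      simp
    simpa [fwdDiff] using hr_const
  refine ⟨Q + Polynomial.C (ψ 0), funext fun x => ?_⟩
  have : ψ x = ψ 0 := eq_of_forall_fwdDiff_const (hφ.sub Q.continuous) hconst (by simpa using hper 0) x
  rw [Polynomial.eval_add, Polynomial.eval_C, ← this]
  exact (add_sub_cancel _ _).symm

namespace FwdDiffVanishes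

theorem exists_polynomial {k : ℕ} {φ : ℝ → ℝ} (hv : FwdDiffVanishes k φ) (hφ : Continuous φ) :
    ∃ P : ℝ[X], φ = P.eval := by
  induction k generalizing φ with
  | zero => exact ⟨0, hv.trans (funext fun _ => Polynomial.eval_zero.symm)⟩
  | succ k ih =>
    exact exists_polynomial_of_forall_fwdDiff hφ fun σ =>
      ih (hv σ) ((hφ.comp (continuous_add_const σ)).sub hφ)

theorem exists_polynomial_natDegree_le {k : ℕ} {φ : ℝ → ℝ} (hv : FwdDiffVanishes (k + 1) φ)
    (hφ : Continuous φ) : ∃ P : ℝ[X], P.natDegree ≤ k ∧ φ = P.eval := by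
  obtain ⟨P, rfl⟩ := hv.exists_polynomial hφ
  exact ⟨P, Polynomial.natDegree_le_of_fwdDiff_iterate_eq_zero (hv.iterate_eq_zero 1), rfl⟩

end FwdDiffVanishes

namespace MvPolynomial

theorem IsHomogeneous.eval_smul {σ R : Type*} [CommSemiring R] {φ : MvPolynomial σ R} {n : ℕ}
    (hφ : φ.IsHomogeneous n) (s : R) (x : σ → R) : eval (s • x) φ = s ^ n * eval x φ := by
  rw [eval_eq, eval_eq, Finset.mul_sum]
  refine Finset.sum_congr rfl fun d hd => ?_
  have hdeg : ∑ i ∈ d.support, d i = n := by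
    rw [← Finsupp.degree_apply, Finsupp.degree_eq_weight_one]
    exact hφ (mem_support_iff.mp hd)
  simp_rw [Pi.smul_apply, smul_eq_mul, mul_pow, Finset.prod_mul_distrib,
    Finset.prod_pow_eq_pow_sum, hdeg]
  ring

theorem totalDegree_le_of_forall_natDegree_le {σ R : Type*} [CommRing R] [IsDomain R]
    [Infinite R] {p : MvPolynomial σ R} {m : ℕ}
    (H : ∀ w : σ → R, ∃ q : R[X], q.natDegree ≤ m ∧ ∀ s, eval (s • w) p = q.eval s) :
    p.totalDegree ≤ m := by
  have hcomp : ∀ d, m < d → homogeneousComponent d p = 0 := by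
    intro d hd
    by_cases hdp : p.totalDegree < d
    · exact homogeneousComponent_eq_zero d p hdp
    refine MvPolynomial.funext fun w => ?_
    obtain ⟨q, hqm, hq⟩ := H w
    have hq' : q = ∑ e ∈ Finset.range (p.totalDegree + 1),
        Polynomial.monomial e (eval w (homogeneousComponent e p)) := Polynomial.funext fun s => by
      rw [← hq]
      conv_lhs => rw [← sum_homogeneousComponent p]
      simp [(homogeneousComponent_isHomogeneous _ _).eval_smul, Polynomial.eval_finsetSum,
        mul_comm]
    simpa [Polynomial.coeff_monomial, Polynomial.coeff_eq_zero_of_natDegree_lt (hqm.trans_lt hd),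
      Nat.lt_succ_of_le (not_lt.mp hdp), eq_comm] using congrArg (Polynomial.coeff · d) hq'
  refine Finset.sup_le fun d hd => ?_
  by_contra! h
  have := congrArg (coeff d) (hcomp _ h)
  rw [coeff_homogeneousComponent, if_pos (by rfl)] at this
  exact mem_support_iff.mp hd this

theorem exists_eval_eq_of_forall_update {K : Type*} [Field K] [Infinite K] {n D : ℕ}
    {f : (Fin n → K) → K}
    (hf : ∀ i x, ∃ p : K[X], p.natDegree ≤ D ∧ ∀ s, f (Function.update x i s) = p.eval s) :
    ∃ P : MvPolynomial (Fin n) K, ∀ x, f x = eval x P := by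
  induction n with
  | zero => exact ⟨C (f Fin.elim0), fun x => by rw [eval_C, Subsingleton.elim x Fin.elim0]⟩
  | succ n ih =>
    have hslice : ∀ a : K, ∃ q : MvPolynomial (Fin n) K, ∀ y, f (Fin.snoc y a) = eval y q := by
      intro a
      refine ih fun i y => ?_
      obtain ⟨p, hpD, hp⟩ := hf i.castSucc (Fin.snoc y a)
      exact ⟨p, hpD, fun s => by rw [← hp s, Fin.snoc_update]⟩
    choose q hq using hslice
    let v : ℕ ↪ K := Infinite.natEmbedding K
    let nodes := Finset.range (D + 1)
    refine ⟨∑ j ∈ nodes, rename Fin.castSucc (q (v j)) *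
        (Lagrange.basis nodes v j).toMvPolynomial (Fin.last n), fun x => ?_⟩
    obtain ⟨p, hpD, hp⟩ := hf (Fin.last n) x
    have hline : ∀ a, f (Fin.snoc (Fin.init x) a) = p.eval a := fun a => by
      rw [← hp, ← Fin.update_snoc_last, Fin.snoc_init_self]
    have hdeg : p.degree < nodes.card := by
      rw [Finset.card_range]
      exact Polynomial.degree_le_natDegree.trans_lt (by exact_mod_cast Nat.lt_succ_of_le hpD)
    have hfx : f x = p.eval (x (Fin.last n)) := by rw [← hline, Fin.snoc_init_self]
    rw [hfx, Lagrange.eq_interpolate v.injective.injOn hdeg, Lagrange.interpolate_apply,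
      Polynomial.eval_finsetSum, map_sum]
    refine Finset.sum_congr rfl fun j _ => ?_
    rw [Polynomial.eval_mul, Polynomial.eval_C, map_mul, eval_rename, eval_toMvPolynomial, ← hq]
    exact congrArg (· * _) (hline (v j)).symm

end MvPolynomial

theorem FwdDiffVanishes.exists_mvPolynomial {n m : ℕ} {f : (Fin n → ℝ) → ℝ}
    (hv : FwdDiffVanishes (m + 1) f) (hf : Continuous f) :
    ∃ p : MvPolynomial (Fin n) ℝ, p.totalDegree ≤ m ∧ ∀ t, f t = MvPolynomial.eval t p := by
  have hline : ∀ x w, ∃ q : ℝ[X], q.natDegree ≤ m ∧ ∀ s : ℝ, f (x + s • w) = q.eval s := by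
    intro x w
    obtain ⟨q, hqm, hq⟩ := ((hv.comp_add_left x).comp_addMonoidHom
      (LinearMap.toSpanSingleton ℝ _ w).toAddMonoidHom).exists_polynomial_natDegree_le
      (hf.comp (continuous_const.add (continuous_id.smul continuous_const)))
    exact ⟨q, hqm, congrFun hq⟩
  obtain ⟨p, hp⟩ := MvPolynomial.exists_eval_eq_of_forall_update fun i x => by
    obtain ⟨q, hqm, hq⟩ := hline (Function.update x i 0) (Pi.single i 1)
    refine ⟨q, hqm, fun s => ?_⟩
    rw [← hq]
    congr 1
    ext j
    rcases eq_or_ne j i with rfl | hji <;> simp [*]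
  refine ⟨p, MvPolynomial.totalDegree_le_of_forall_natDegree_le fun w => ?_, hp⟩
  obtain ⟨q, hqm, hq⟩ := hline 0 w
  exact ⟨q, hqm, fun s => by rw [← hp, ← hq, zero_add]⟩

open Matrix MvPolynomial

/-- If continuous functions `f_1, …, f_m, g, h : ℝ^n → ℝ` satisfy
`Σ_i f_i (t₁ + C_i t₂) = g(t₁) + h(t₂)` for all `t₁, t₂`, where the `C_i` are
invertible `n × n` matrices with `C_i - C_j` invertible for `i ≠ j`, then all of
`f_1, …, f_m, g, h` are polynomial functions of degree at most `m`. -/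
theorem additive_decomposition_polynomial_vector
    {n m : ℕ} (f : Fin m → (Fin n → ℝ) → ℝ) (g h : (Fin n → ℝ) → ℝ)
    (hf : ∀ i, Continuous (f i)) (hg : Continuous g) (hh : Continuous h)
    (C : Fin m → Matrix (Fin n) (Fin n) ℝ)
    (hC : ∀ i, IsUnit (C i).det)
    (hCij : ∀ i j, i ≠ j → IsUnit (C i - C j).det)
    (heq : ∀ t₁ t₂ : Fin n → ℝ, ∑ i, f i (t₁ + (C i).mulVec t₂) = g t₁ + h t₂) :
    (∀ i, ∃ p : MvPolynomial (Fin n) ℝ,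
        p.totalDegree ≤ m ∧ ∀ t, f i t = MvPolynomial.eval t p) ∧
    (∃ p : MvPolynomial (Fin n) ℝ,
        p.totalDegree ≤ m ∧ ∀ t, g t = MvPolynomial.eval t p) ∧
    (∃ p : MvPolynomial (Fin n) ℝ,
        p.totalDegree ≤ m ∧ ∀ t, h t = MvPolynomial.eval t p) := by
  let F : Option (Fin m) → (Fin n → ℝ) → ℝ := fun i => i.elim (-g) f
  let A : Option (Fin m) → Matrix (Fin n) (Fin n) ℝ := fun i => i.elim 0 C
  let L : Option (Fin m) → (Fin n → ℝ) →+ (Fin n → ℝ) := fun i => (A i).mulVecLin.toAddMonoidHom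
  have hA : ∀ i j, i ≠ j → IsUnit (A i - A j) := by
    rintro (_ | i) (_ | j) hij
    · exact absurd rfl hij
    · simpa [A] using ((isUnit_iff_isUnit_det _).2 (hC j)).neg
    · simpa [A] using (isUnit_iff_isUnit_det _).2 (hC i)
    · exact (isUnit_iff_isUnit_det _).2 (hCij i j (Option.some_injective _ |>.ne_iff.mp hij))
  have hL : ∀ i ∈ Finset.univ, ∀ j ∈ Finset.univ, i ≠ j → Function.Surjective ⇑(L i - L j) :=
    fun i _ j _ hij => by
      rw [show ⇑(L i - L j) = (A i - A j).mulVec from funext fun v => by simp [L, sub_mulVec]]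
      exact mulVec_surjective_iff_isUnit.2 (hA i j hij)
  have hsum : ∀ x y, ∑ i, F i (x + L i y) = h y := fun x y => by
    simp [Fintype.sum_option, F, L, A, heq]
  have hF : ∀ i, FwdDiffVanishes (m + 1) (F i) := fun i => by
    simpa using fwdDiffVanishes_of_sum_comp_add_eq hL hsum i (Finset.mem_univ i)
  have hgv : FwdDiffVanishes (m + 1) g := by simpa [F] using (hF none).neg
  have hhv : FwdDiffVanishes (m + 1) h := by
    rw [show h = ∑ i, F i ∘ L i from funext fun y => by simpa using (hsum 0 y).symm]
    exact .sum fun i _ => (hF i).comp_addMonoidHom (L i)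
  exact ⟨fun i => (hF (some i)).exists_mvPolynomial (hf i), hgv.exists_mvPolynomial hg,
    hhv.exists_mvPolynomial hh⟩
end
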